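/- arXiv:1908.11621 — 2 statements merged into one kernel-verified Lean document; each statement's English description precedes it below -/
import Mathlib

section
/- Let 𝒢 be a class of graphs closed under deletion of edges. Suppose that for every graph G ∈ 𝒢, all non-adjacent distinct vertices s, t ∈ V(G), and all non-negative integers k, l with l ≥ 1: whenever (k,l) is a connectivity pair for s and t in G, there exist k+l edge-disjoint s-t paths of which k+1 are internally disjoint. Then the same conclusion holds for every graph G ∈ 𝒢 and all distinct vertices s, t ∈ V(G) (adjacent or not). -/
/-- A multigraph on vertex type `V` with edges drawn from `E`: each edge `e` in the
edge set joins the two (distinct) vertices of `ends e`.  Parallel edges are allowed,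
loops are not. -/
structure Multigraph (V : Type) (E : Type) where
  edgeSet : Set E
  ends : E → Sym2 V
  no_loops : ∀ e ∈ edgeSet, ¬ (ends e).IsDiag

namespace Multigraph

variable {V E : Type}

/-- Walks in a multigraph. -/
inductive Walk (G : Multigraph V E) : V → V → Type
  | nil (v : V) : Walk G v v
  | cons {u v w : V} (e : E) (he : e ∈ G.edgeSet) (huv : G.ends e = s(u, v))
      (p : Walk G v w) : Walk G u w

namespace Walk

variable {G : Multigraph V E}

/-- The list of vertices visited by a walk. -/
def support : {u v : V} → G.Walk u v → List V
  | u, _, .nil _ => [u]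
  | u, _, .cons _ _ _ p => u :: p.support

/-- The list of edges used by a walk. -/
def edges : {u v : V} → G.Walk u v → List E
  | _, _, .nil _ => []
  | _, _, .cons e _ _ p => e :: p.edges

/-- A walk is a path if it visits no vertex twice. -/
def IsPath {u v : V} (p : G.Walk u v) : Prop := p.support.Nodup

end Walk

/-- Two walks are edge-disjoint if they share no edge. -/
def EdgeDisjoint {G : Multigraph V E} {u₁ v₁ u₂ v₂ : V}
    (p : G.Walk u₁ v₁) (q : G.Walk u₂ v₂) : Prop :=
  ∀ e, e ∈ p.edges → e ∉ q.edges

/-- Two `s`-`t` walks are internally disjoint if they share no vertices other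
than `s` and `t`. -/
def InternallyDisjoint {G : Multigraph V E} {s t : V}
    (p q : G.Walk s t) : Prop :=
  ∀ v, v ∈ p.support → v ∈ q.support → v = s ∨ v = t

/-- `(W, F)` is an `s`-`t` disconnecting pair: `W` is a set of vertices avoiding `s`
and `t`, `F` is a set of edges of `G`, and `G - W - F` contains no `s`-`t` path. -/
def DisconnectingPair (G : Multigraph V E) (s t : V) (W : Finset V) (F : Finset E) : Prop :=
  (↑W : Set V) ⊆ ({s, t} : Set V)ᶜ ∧ (↑F : Set E) ⊆ G.edgeSet ∧
    ∀ p : G.Walk s t, (∃ x ∈ p.support, x ∈ W) ∨ ∃ e ∈ p.edges, e ∈ F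

/-- `(k, l)` is a connectivity pair for `s` and `t` in `G`: there is an `s`-`t`
disconnecting pair of order `k` and size `l`, but none of cardinality less than
`k + l` having order at most `k` and size at most `l`. -/
def ConnectivityPair (G : Multigraph V E) (s t : V) (k l : ℕ) : Prop :=
  (∃ (W : Finset V) (F : Finset E), G.DisconnectingPair s t W F ∧ W.card = k ∧ F.card = l) ∧
    ¬ ∃ (W : Finset V) (F : Finset E), G.DisconnectingPair s t W F ∧
        W.card + F.card < k + l ∧ W.card ≤ k ∧ F.card ≤ l

/-- There are `k + l` pairwise edge-disjoint `s`-`t` paths in `G` of which `k + 1`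
are pairwise internally disjoint. -/
def HasGoodPaths (G : Multigraph V E) (s t : V) (k l : ℕ) : Prop :=
  ∃ P : Fin (k + l) → G.Walk s t,
    (∀ i, (P i).IsPath) ∧
    (∀ i j, i ≠ j → EdgeDisjoint (P i) (P j)) ∧
    ∃ S : Finset (Fin (k + l)), S.card = k + 1 ∧
      ∀ i ∈ S, ∀ j ∈ S, i ≠ j → InternallyDisjoint (P i) (P j)

/-- Delete a set of edges from a multigraph. -/
def deleteEdges (G : Multigraph V E) (F : Set E) : Multigraph V E :=
  ⟨G.edgeSet \ F, G.ends, fun e he => G.no_loops e he.1⟩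

end Multigraph

/-!
All `s`-`t` edges lie in every disconnecting pair, so deleting the `m ≥ 1` of them turns a
connectivity pair `(k, l)` into the connectivity pair `(k, l - m)` of a graph of the class in
which `s` and `t` are non-adjacent; the `m` edges, used as one-edge paths, then complete a
family found there. If `l - m ≥ 1` the hypothesis provides that family. If `l = m` we need `k`
internally disjoint paths, i.e. Menger's theorem, and this too follows from the hypothesis:
finitely many walks already witness that no `k - 1` vertices separate `s` from `t`; in the
finite subgraph they span, a disconnecting pair of order at most `k - 1` and minimum size `l'`
has order exactly `k - 1` (a smaller order could trade an edge for one of its end vertices),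
so `(k - 1, l')` is a connectivity pair with `l' ≥ 1`, and the hypothesis yields the `k` paths.
-/

theorem Finset.exists_finset_forall_exists_disjoint {α V : Type*} (f : α → Finset V) {S : Set V}
    {n : ℕ} (h : ∀ W : Finset V, ↑W ⊆ S → W.card ≤ n → ∃ a, Disjoint (f a) W) :
    ∃ T : Finset α, ∀ W : Finset V, ↑W ⊆ S → W.card ≤ n → ∃ a ∈ T, Disjoint (f a) W := by
  classical
  -- induct on `n`: a set `W` meeting `f a` contains one of its finitely many points, put into `B`
  suffices key : ∀ c (B : Finset V), ↑B ⊆ S → B.card + c ≤ n → ∃ T : Finset α,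
      ∀ W : Finset V, ↑W ⊆ S → W.card ≤ c → ∃ a ∈ T, Disjoint (f a) (B ∪ W) by
    obtain ⟨T, hT⟩ := key n ∅ (by simp) (by simp)
    exact ⟨T, fun W hW hWn => by simpa using hT W hW hWn⟩
  intro c
  induction c with
  | zero =>
    intro B hB hBn
    obtain ⟨a, ha⟩ := h B hB (by omega)
    refine ⟨{a}, fun W _ hW => ⟨a, mem_singleton_self a, ?_⟩⟩
    rwa [card_eq_zero.1 (Nat.le_zero.1 hW), union_empty]
  | succ c ih =>
    intro B hB hBn
    obtain ⟨a, ha⟩ := h B hB (by omega)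
    have hx : ∀ x ∈ f a, x ∈ S → ∃ T : Finset α, ∀ W : Finset V, ↑W ⊆ S → W.card ≤ c →
        ∃ b ∈ T, Disjoint (f b) (insert x B ∪ W) := fun x _ hxS =>
      ih (insert x B) (by simp [Set.insert_subset_iff, hxS, hB])
        ((Nat.add_le_add_right (card_insert_le x B) c).trans (by omega))
    choose! T hT using hx
    refine ⟨insert a ((f a).biUnion T), fun W hW hWc => ?_⟩
    by_cases hd : Disjoint (f a) W
    · exact ⟨a, mem_insert_self _ _, disjoint_union_right.2 ⟨ha, hd⟩⟩
    obtain ⟨x, hxa, hxW⟩ := not_disjoint_iff.1 hd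
    obtain ⟨b, hbT, hb⟩ := hT x hxa (hW hxW) (W.erase x)
      ((coe_subset.2 (erase_subset x W)).trans hW) (by rw [card_erase_of_mem hxW]; omega)
    refine ⟨b, mem_insert_of_mem (mem_biUnion.2 ⟨x, hxa, hbT⟩), hb.mono_right ?_⟩
    intro y hy
    simp only [mem_union, mem_insert, mem_erase] at hy ⊢
    tauto

open Finset

namespace Multigraph

variable {V E : Type} {G : Multigraph V E} {s t u v : V}

namespace Walk

theorem start_mem_support (p : G.Walk u v) : u ∈ p.support := by
  cases p <;> simp [support]

theorem edges_subset_edgeSet (p : G.Walk u v) : ∀ e ∈ p.edges, e ∈ G.edgeSet := by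
  induction p with
  | nil => simp [edges]
  | cons e he _ p ih => simpa [edges, he] using ih

theorem mem_support_of_mem_edges (p : G.Walk u v) {e : E} {x : V} (he : e ∈ p.edges)
    (hx : x ∈ G.ends e) : x ∈ p.support := by
  induction p with
  | nil => simp [edges] at he
  | cons f _ hf q ih =>
    rcases List.mem_cons.1 he with rfl | he
    · rw [hf, Sym2.mem_iff] at hx
      rcases hx with rfl | rfl
      · exact List.mem_cons_self
      · exact List.mem_cons_of_mem _ q.start_mem_support
    · exact List.mem_cons_of_mem _ (ih he)

theorem exists_mem_edges_of_ne (p : G.Walk u v) (h : u ≠ v) : ∃ e, e ∈ p.edges := by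
  cases p with
  | nil => exact absurd rfl h
  | cons e => exact ⟨e, List.mem_cons_self⟩

def ofDeleteEdges {F : Set E} : {u v : V} → (G.deleteEdges F).Walk u v → G.Walk u v
  | _, _, .nil v => .nil v
  | _, _, .cons e he huv p => .cons e he.1 huv p.ofDeleteEdges

@[simp] theorem support_ofDeleteEdges {F : Set E} (p : (G.deleteEdges F).Walk u v) :
    p.ofDeleteEdges.support = p.support := by
  induction p with
  | nil => rfl
  | cons _ _ _ _ ih => simp [ofDeleteEdges, support, ih]

@[simp] theorem edges_ofDeleteEdges {F : Set E} (p : (G.deleteEdges F).Walk u v) :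
    p.ofDeleteEdges.edges = p.edges := by
  induction p with
  | nil => rfl
  | cons _ _ _ _ ih => simp [ofDeleteEdges, edges, ih]

def toDeleteEdges {F : Set E} : {u v : V} → (p : G.Walk u v) → (∀ e ∈ p.edges, e ∉ F) →
    (G.deleteEdges F).Walk u v
  | _, _, .nil v, _ => .nil v
  | _, _, .cons e he huv p, h =>
    .cons e ⟨he, h e List.mem_cons_self⟩ huv
      (p.toDeleteEdges fun e' he' => h e' (List.mem_cons_of_mem _ he'))

@[simp] theorem support_toDeleteEdges {F : Set E} (p : G.Walk u v)
    (h : ∀ e ∈ p.edges, e ∉ F) : (p.toDeleteEdges h).support = p.support := by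
  induction p with
  | nil => rfl
  | cons _ _ _ _ ih => simp [toDeleteEdges, support, ih]

@[simp] theorem edges_toDeleteEdges {F : Set E} (p : G.Walk u v) (h : ∀ e ∈ p.edges, e ∉ F) :
    (p.toDeleteEdges h).edges = p.edges := by
  induction p with
  | nil => rfl
  | cons _ _ _ _ ih => simp [toDeleteEdges, edges, ih]

end Walk

def edgesBetween (G : Multigraph V E) (s t : V) : Set E :=
  {e | e ∈ G.edgeSet ∧ G.ends e = s(s, t)}

def edgeWalk {e : E} (he : e ∈ G.edgesBetween s t) : G.Walk s t :=
  .cons e he.1 he.2 (.nil t)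

@[simp] theorem support_edgeWalk {e : E} (he : e ∈ G.edgesBetween s t) :
    (edgeWalk he).support = [s, t] := rfl

@[simp] theorem edges_edgeWalk {e : E} (he : e ∈ G.edgesBetween s t) :
    (edgeWalk he).edges = [e] := rfl

theorem isPath_edgeWalk (hst : s ≠ t) {e : E} (he : e ∈ G.edgesBetween s t) :
    (edgeWalk he).IsPath := by
  simp [Walk.IsPath, hst]

theorem internallyDisjoint_edgeWalk {e : E} (he : e ∈ G.edgesBetween s t) (p : G.Walk s t) :
    InternallyDisjoint (edgeWalk he) p := by
  intro v hv _
  simpa using hv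

theorem exists_mem_ends_ne {e : E} (he : e ∈ G.edgeSet) (hst : G.ends e ≠ s(s, t)) :
    ∃ w ∈ G.ends e, w ≠ s ∧ w ≠ t := by
  have hloop := G.no_loops e he
  generalize G.ends e = z at hloop hst
  induction z using Sym2.ind with
  | h a b =>
    simp only [Sym2.mk_isDiag_iff, Sym2.mem_iff, exists_eq_or_imp, exists_eq_left] at hloop ⊢
    rw [Ne, Sym2.eq_iff] at hst
    grind

theorem disconnectingPair_empty_of_edgeSet_eq (hst : s ≠ t) {F : Finset E} (hF : G.edgeSet = ↑F) :
    G.DisconnectingPair s t ∅ F := by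
  refine ⟨by simp, hF.ge, fun p => Or.inr ?_⟩
  obtain ⟨e, he⟩ := p.exists_mem_edges_of_ne hst
  exact ⟨e, he, mem_coe.1 (hF ▸ p.edges_subset_edgeSet e he)⟩

namespace DisconnectingPair

variable {W : Finset V} {F : Finset E}

theorem nonempty_of_walk (h : G.DisconnectingPair s t W F) (p : G.Walk s t)
    (hp : ∀ x ∈ p.support, x ∉ W) : F.Nonempty := by
  rcases h.2.2 p with ⟨x, hx, hxW⟩ | ⟨e, -, heF⟩
  · exact absurd hxW (hp x hx)
  · exact ⟨e, heF⟩

theorem edgesBetween_subset (h : G.DisconnectingPair s t W F) : G.edgesBetween s t ⊆ ↑F := by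
  intro e he
  rcases h.2.2 (edgeWalk he) with ⟨x, hx, hxW⟩ | ⟨e', he', heF⟩
  · have hst := h.1 hxW
    simp only [support_edgeWalk, List.mem_cons, List.not_mem_nil, or_false] at hx
    simp only [Set.mem_compl_iff, Set.mem_insert_iff, Set.mem_singleton_iff] at hst
    exact absurd hx hst
  · simp only [edges_edgeWalk, List.mem_singleton] at he'
    exact he' ▸ heF

theorem deleteEdges [DecidableEq E] (h : G.DisconnectingPair s t W F) (X : Finset E) :
    (G.deleteEdges ↑X).DisconnectingPair s t W (F \ X) := by
  refine ⟨h.1, fun e he => ?_, fun p => ?_⟩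
  · rw [coe_sdiff] at he
    exact ⟨h.2.1 he.1, he.2⟩
  · rcases h.2.2 p.ofDeleteEdges with ⟨x, hx, hxW⟩ | ⟨e, he, heF⟩
    · exact Or.inl ⟨x, by simpa using hx, hxW⟩
    · rw [Walk.edges_ofDeleteEdges] at he
      exact Or.inr ⟨e, he, mem_sdiff.2 ⟨heF, (p.edges_subset_edgeSet e he).2⟩⟩

theorem of_deleteEdges [DecidableEq E] {X : Finset E}
    (h : (G.deleteEdges ↑X).DisconnectingPair s t W F) (hX : ↑X ⊆ G.edgeSet) :
    G.DisconnectingPair s t W (F ∪ X) := by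
  refine ⟨h.1, ?_, fun p => ?_⟩
  · rw [coe_union]
    exact Set.union_subset (h.2.1.trans fun e he => he.1) hX
  by_cases hp : ∃ e ∈ p.edges, e ∈ X
  · obtain ⟨e, he, heX⟩ := hp
    exact Or.inr ⟨e, he, mem_union_right _ heX⟩
  push Not at hp
  rcases h.2.2 (p.toDeleteEdges hp) with ⟨x, hx, hxW⟩ | ⟨e, he, heF⟩
  · exact Or.inl ⟨x, by simpa using hx, hxW⟩
  · exact Or.inr ⟨e, by simpa using he, mem_union_left _ heF⟩

theorem exchange [DecidableEq V] [DecidableEq E] (h : G.DisconnectingPair s t W F) {f : E}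
    (hf : f ∈ F) (hst : G.ends f ≠ s(s, t)) :
    ∃ w, G.DisconnectingPair s t (insert w W) (F.erase f) := by
  obtain ⟨w, hw, hws, hwt⟩ := exists_mem_ends_ne (h.2.1 hf) hst
  refine ⟨w, ?_, ((coe_subset.2 (erase_subset f F)).trans h.2.1), fun p => ?_⟩
  · rw [coe_insert]
    exact Set.insert_subset (by simp [hws, hwt]) h.1
  rcases h.2.2 p with ⟨x, hx, hxW⟩ | ⟨e, he, heF⟩
  · exact Or.inl ⟨x, hx, mem_insert_of_mem hxW⟩
  by_cases hef : e = f
  · subst hef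
    exact Or.inl ⟨w, p.mem_support_of_mem_edges he hw, mem_insert_self w W⟩
  · exact Or.inr ⟨e, he, mem_erase.2 ⟨hef, heF⟩⟩

end DisconnectingPair

namespace ConnectivityPair

variable {k l : ℕ}

theorem card_le (h : G.ConnectivityPair s t k l) {A : Finset E}
    (hA : ↑A ⊆ G.edgesBetween s t) : A.card ≤ l := by
  obtain ⟨W, F, hWF, -, hF⟩ := h.1
  exact hF ▸ card_le_card (coe_subset.1 (hA.trans hWF.edgesBetween_subset))

theorem deleteEdges (h : G.ConnectivityPair s t k l) {A : Finset E}
    (hA : ↑A ⊆ G.edgesBetween s t) :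
    (G.deleteEdges ↑A).ConnectivityPair s t k (l - A.card) := by
  classical
  have hAl := h.card_le hA
  obtain ⟨⟨W, F, hWF, hW, hF⟩, hmin⟩ := h
  have hAF : A ⊆ F := coe_subset.1 (hA.trans hWF.edgesBetween_subset)
  refine ⟨⟨W, F \ A, hWF.deleteEdges A, hW, by rw [card_sdiff_of_subset hAF, hF]⟩, ?_⟩
  rintro ⟨W', F', hWF', hsum, hW', hF'⟩
  have hdisj : Disjoint F' A := disjoint_left.2 fun e he heA => (hWF'.2.1 he).2 heA
  refine hmin ⟨W', F' ∪ A, hWF'.of_deleteEdges (hA.trans fun e he => he.1), ?_, hW', ?_⟩ <;>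
    rw [card_union_of_disjoint hdisj] <;> omega

theorem exists_walk_of_card_lt (h : G.ConnectivityPair s t k l) {W : Finset V}
    (hW : ↑W ⊆ ({s, t} : Set V)ᶜ) (hWk : W.card < k) :
    ∃ p : G.Walk s t, ∀ x ∈ p.support, x ∉ W := by
  by_contra! hno
  exact h.2 ⟨W, ∅, ⟨hW, by simp, fun p => Or.inl (hno p)⟩, by simp; omega, hWk.le, by simp⟩

end ConnectivityPair

theorem InternallyDisjoint.symm {p q : G.Walk s t} (h : InternallyDisjoint p q) :
    InternallyDisjoint q p :=
  fun v hq hp => h v hp hq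

theorem EdgeDisjoint.symm {u₁ v₁ u₂ v₂ : V} {p : G.Walk u₁ v₁} {q : G.Walk u₂ v₂}
    (h : EdgeDisjoint p q) : EdgeDisjoint q p :=
  fun e hq hp => h e hp hq

def IsGoodFamily {ι : Type*} (P : ι → G.Walk s t) (S : Finset ι) : Prop :=
  (∀ i, (P i).IsPath) ∧ Pairwise (fun i j => EdgeDisjoint (P i) (P j)) ∧
    (S : Set ι).Pairwise fun i j => InternallyDisjoint (P i) (P j)

theorem hasGoodPaths_iff {k l : ℕ} : G.HasGoodPaths s t k l ↔
    ∃ (P : Fin (k + l) → G.Walk s t) (S : Finset (Fin (k + l))), S.card = k + 1 ∧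
      IsGoodFamily P S :=
  ⟨fun ⟨P, hpath, hed, S, hS, hid⟩ => ⟨P, S, hS, hpath, hed, hid⟩,
    fun ⟨P, S, hS, hpath, hed, hid⟩ => ⟨P, hpath, hed, S, hS, hid⟩⟩

namespace IsGoodFamily

variable {ι κ : Type*} {P : ι → G.Walk s t} {S : Finset ι}

theorem comp_embedding (hP : IsGoodFamily P S) (f : κ ↪ ι) {T : Finset κ}
    (hT : T.map f ⊆ S) : IsGoodFamily (P ∘ f) T :=
  ⟨fun i => hP.1 (f i), fun _ _ hij => hP.2.1 (f.injective.ne hij),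
    fun _ hi _ hj hij => hP.2.2 (hT (mem_map_of_mem f hi)) (hT (mem_map_of_mem f hj))
      (f.injective.ne hij)⟩

theorem ofDeleteEdges {F : Set E} {P : ι → (G.deleteEdges F).Walk s t}
    (hP : IsGoodFamily P S) : IsGoodFamily (fun i => (P i).ofDeleteEdges) S := by
  refine ⟨fun i => ?_, fun i j hij => ?_, fun i hi j hj hij => ?_⟩
  · simpa [Walk.IsPath] using hP.1 i
  · simpa [EdgeDisjoint] using hP.2.1 hij
  · simpa [InternallyDisjoint] using hP.2.2 hi hj hij

end IsGoodFamily

theorem HasGoodPaths.exists_isGoodFamily {k l : ℕ} (h : G.HasGoodPaths s t k l) :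
    ∃ P : Fin (k + 1) → G.Walk s t, IsGoodFamily P univ := by
  obtain ⟨P, S, hS, hP⟩ := hasGoodPaths_iff.1 h
  exact ⟨_, hP.comp_embedding (S.orderEmbOfFin hS).toEmbedding (by simp)⟩

theorem hasGoodPaths_of_isGoodFamily {ι : Type*} [Fintype ι] {k l : ℕ} {P : ι → G.Walk s t}
    {S : Finset ι} (hP : IsGoodFamily P S) (hcard : Fintype.card ι = k + l)
    (hS : k + 1 ≤ S.card) : G.HasGoodPaths s t k l := by
  obtain ⟨S', hS'S, hS'⟩ := exists_subset_card_eq hS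
  let e := Fintype.equivFinOfCardEq hcard
  refine hasGoodPaths_iff.2 ⟨P ∘ e.symm, S'.map e.toEmbedding, by simp [hS'],
    hP.comp_embedding e.symm.toEmbedding ?_⟩
  simpa [map_map] using hS'S

theorem hasGoodPaths_of_deleteEdges {ι : Type*} [Fintype ι] {k l : ℕ} (hst : s ≠ t)
    {A : Finset E} (hA : ↑A ⊆ G.edgesBetween s t) (hAne : A.Nonempty)
    {P : ι → (G.deleteEdges ↑A).Walk s t} {S : Finset ι} (hP : IsGoodFamily P S)
    (hS : k ≤ S.card) (hcard : Fintype.card ι + A.card = k + l) :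
    G.HasGoodPaths s t k l := by
  classical
  obtain ⟨a, ha⟩ := hAne
  let Q : ι ⊕ A → G.Walk s t :=
    Sum.elim (fun i => (P i).ofDeleteEdges) fun e => edgeWalk (hA e.2)
  have hlift := hP.ofDeleteEdges
  have hQA : ∀ i, ∀ e ∈ (Q (.inl i)).edges, e ∉ A := fun i e he heA =>
    ((P i).edges_subset_edgeSet e (by simpa [Q] using he)).2 heA
  refine hasGoodPaths_of_isGoodFamily (P := Q) (S := insert (.inr ⟨a, ha⟩) (S.map .inl))
    ⟨?_, ?_, ?_⟩ (by simp [hcard]) (by rw [card_insert_of_notMem (by simp), card_map]; omega)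
  · rintro (i | e)
    · exact hlift.1 i
    · exact isPath_edgeWalk hst (hA e.2)
  · have hdisj : ∀ i (e : A), EdgeDisjoint (Q (.inl i)) (Q (.inr e)) := fun i e f hf hfe => by
      simp only [Q, Sum.elim_inr, edges_edgeWalk, List.mem_singleton] at hfe
      exact hQA i f hf (hfe ▸ e.2)
    rintro (i | e) (j | f) hij
    · exact hlift.2.1 (fun h => hij (congrArg _ h))
    · exact hdisj i f
    · exact (hdisj j e).symm
    · intro x hx hxf
      simp only [Q, Sum.elim_inr, edges_edgeWalk, List.mem_singleton] at hx hxf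
      exact hij (congrArg _ (Subtype.ext (hx.symm.trans hxf)))
  · intro x hx y hy hxy
    simp only [coe_insert, coe_map, Set.mem_insert_iff, Set.mem_image, mem_coe] at hx hy
    rcases hx with rfl | ⟨i, hi, rfl⟩
    · exact internallyDisjoint_edgeWalk (hA ha) _
    rcases hy with rfl | ⟨j, hj, rfl⟩
    · exact (internallyDisjoint_edgeWalk (hA ha) _).symm
    · exact hlift.2.2 hi hj (fun h => hxy (congrArg _ h))

theorem exists_connectivityPair (hst : s ≠ t) (hnadj : ¬ ∃ e ∈ G.edgeSet, G.ends e = s(s, t))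
    (hfin : G.edgeSet.Finite) {k : ℕ}
    (hcut : ∀ W : Finset V, ↑W ⊆ ({s, t} : Set V)ᶜ → W.card ≤ k →
      ∃ p : G.Walk s t, ∀ x ∈ p.support, x ∉ W) :
    ∃ l, 1 ≤ l ∧ G.ConnectivityPair s t k l := by
  classical
  have hex : ∃ n, ∃ (W : Finset V) (F : Finset E),
      G.DisconnectingPair s t W F ∧ W.card ≤ k ∧ F.card = n :=
    ⟨_, ∅, hfin.toFinset, disconnectingPair_empty_of_edgeSet_eq hst (by simp), by simp, rfl⟩
  obtain ⟨W, F, hWF, hWk, hF⟩ := Nat.find_spec hex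
  have hF_nonempty : ∀ {W' : Finset V} {F' : Finset E}, G.DisconnectingPair s t W' F' →
      W'.card ≤ k → F'.Nonempty := fun h hW' =>
    have ⟨p, hp⟩ := hcut _ h.1 hW'
    h.nonempty_of_walk p hp
  -- a pair of order `< k` can trade an edge for a vertex, so it is not of minimum size
  have hsmall : ∀ {W' : Finset V} {F' : Finset E}, G.DisconnectingPair s t W' F' →
      W'.card < k → Nat.find hex < F'.card := by
    intro W' F' h hW'
    obtain ⟨f, hf⟩ := hF_nonempty h hW'.le
    obtain ⟨w, hw⟩ := h.exchange hf fun hst' => hnadj ⟨f, h.2.1 hf, hst'⟩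
    have := Nat.find_min' hex ⟨_, _, hw, (card_insert_le w W').trans hW', rfl⟩
    rw [card_erase_of_mem hf] at this
    have := card_pos.2 ⟨f, hf⟩
    omega
  have hW : W.card = k := by
    by_contra hne
    exact (hsmall hWF (lt_of_le_of_ne hWk hne)).ne' hF
  refine ⟨Nat.find hex, hF ▸ card_pos.2 (hF_nonempty hWF hWk), ⟨W, F, hWF, hW, hF⟩, ?_⟩
  rintro ⟨W', F', h, hsum, hW', hF'⟩
  have := Nat.find_min' hex ⟨W', F', h, hW', rfl⟩
  have := hsmall h (by omega)
  omega

theorem exists_isGoodFamily_of_forall_card_le {𝒢 : Set (Multigraph V E)} {k : ℕ}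
    (hclosed : ∀ F : Set E, G.deleteEdges F ∈ 𝒢)
    (hyp : ∀ H ∈ 𝒢, (¬ ∃ e ∈ H.edgeSet, H.ends e = s(s, t)) →
      ∀ l, 1 ≤ l → H.ConnectivityPair s t k l → H.HasGoodPaths s t k l)
    (hst : s ≠ t) (hnadj : ¬ ∃ e ∈ G.edgeSet, G.ends e = s(s, t))
    (hcut : ∀ W : Finset V, ↑W ⊆ ({s, t} : Set V)ᶜ → W.card ≤ k →
      ∃ p : G.Walk s t, ∀ x ∈ p.support, x ∉ W) :
    ∃ P : Fin (k + 1) → G.Walk s t, IsGoodFamily P univ := by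
  classical
  obtain ⟨T, hT⟩ :=
    exists_finset_forall_exists_disjoint (fun p : G.Walk s t => p.support.toFinset)
      fun W hW hWk => by simpa [disjoint_left] using hcut W hW hWk
  -- the finite subgraph spanned by the witnesses in `T`
  set X : Finset E := T.biUnion fun p => p.edges.toFinset
  set H := G.deleteEdges (↑X)ᶜ
  have hHX : H.edgeSet = ↑X := by
    refine Set.sdiff_compl.trans (Set.inter_eq_right.2 fun e he => ?_)
    obtain ⟨p, -, hep⟩ := mem_biUnion.1 (mem_coe.1 he)
    exact p.edges_subset_edgeSet e (List.mem_toFinset.1 hep)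
  have hHcut : ∀ W : Finset V, ↑W ⊆ ({s, t} : Set V)ᶜ → W.card ≤ k →
      ∃ p : H.Walk s t, ∀ x ∈ p.support, x ∉ W := by
    intro W hW hWk
    obtain ⟨p, hpT, hp⟩ := hT W hW hWk
    refine ⟨p.toDeleteEdges fun e he heX =>
      heX (mem_biUnion.2 ⟨p, hpT, List.mem_toFinset.2 he⟩), ?_⟩
    simpa [disjoint_left] using hp
  have hHnadj : ¬ ∃ e ∈ H.edgeSet, H.ends e = s(s, t) := fun ⟨e, he, hends⟩ =>
    hnadj ⟨e, he.1, hends⟩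
  obtain ⟨l, hl, hCP⟩ := exists_connectivityPair hst hHnadj (hHX ▸ X.finite_toSet) hHcut
  obtain ⟨P, hP⟩ := (hyp H (hclosed _) hHnadj l hl hCP).exists_isGoodFamily
  exact ⟨_, hP.ofDeleteEdges⟩

theorem ConnectivityPair.exists_isGoodFamily {𝒢 : Set (Multigraph V E)} {k l : ℕ}
    (h : G.ConnectivityPair s t k l) (hclosed : ∀ F : Set E, G.deleteEdges F ∈ 𝒢)
    (hyp : ∀ H ∈ 𝒢, (¬ ∃ e ∈ H.edgeSet, H.ends e = s(s, t)) →
      ∀ k l, 1 ≤ l → H.ConnectivityPair s t k l → H.HasGoodPaths s t k l)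
    (hst : s ≠ t) (hnadj : ¬ ∃ e ∈ G.edgeSet, G.ends e = s(s, t)) :
    ∃ P : Fin k → G.Walk s t, IsGoodFamily P univ := by
  cases k with
  | zero => exact ⟨Fin.elim0, fun i => i.elim0, fun i => i.elim0, fun i => i.elim0⟩
  | succ k =>
    exact exists_isGoodFamily_of_forall_card_le hclosed (fun H hH hH' => hyp H hH hH' k) hst
      hnadj fun W hW hWk => h.exists_walk_of_card_lt hW (Nat.lt_succ_of_le hWk)

end Multigraph

open Multigraph in
/-- If the Beineke–Harary conjecture holds for all graphs of an edge-deletion-closed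
class `𝒢` and all non-adjacent pairs of distinct vertices, then it holds for all graphs
of `𝒢` and all pairs of distinct vertices. -/
theorem conjecture_nonadjacent_suffices {V E : Type} (𝒢 : Set (Multigraph V E))
    (hclosed : ∀ G ∈ 𝒢, ∀ F : Set E, G.deleteEdges F ∈ 𝒢)
    (hyp : ∀ G ∈ 𝒢, ∀ s t : V, s ≠ t → (¬ ∃ e ∈ G.edgeSet, G.ends e = s(s, t)) →
      ∀ k l : ℕ, 1 ≤ l → G.ConnectivityPair s t k l → HasGoodPaths G s t k l) :
    ∀ G ∈ 𝒢, ∀ s t : V, s ≠ t →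
      ∀ k l : ℕ, 1 ≤ l → G.ConnectivityPair s t k l → HasGoodPaths G s t k l := by
  intro G hG s t hst k l hl hCP
  by_cases hadj : ∃ e ∈ G.edgeSet, G.ends e = s(s, t)
  swap
  · exact hyp G hG s t hst hadj k l hl hCP
  obtain ⟨W, F, hWF, -⟩ := hCP.1
  obtain ⟨A, hA⟩ := (F.finite_toSet.subset hWF.edgesBetween_subset).exists_finset_coe
  have hAne : A.Nonempty := by
    obtain ⟨e, he⟩ := hadj
    exact ⟨e, by rw [← Finset.mem_coe, hA]; exact he⟩
  have hAl := hCP.card_le hA.subset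
  have hCP' := hCP.deleteEdges hA.subset
  have hG' := hclosed G hG ↑A
  have hnadj : ¬ ∃ e ∈ (G.deleteEdges ↑A).edgeSet, G.ends e = s(s, t) :=
    fun ⟨e, he, hends⟩ => he.2 (hA ▸ ⟨he.1, hends⟩)
  rcases Nat.eq_zero_or_pos (l - A.card) with hl' | hl'
  · obtain ⟨P, hP⟩ := hCP'.exists_isGoodFamily (hclosed _ hG')
      (fun H hH hH' => hyp H hH s t hst hH') hst hnadj
    exact hasGoodPaths_of_deleteEdges hst hA.subset hAne hP (by simp) (by simp; omega)
  · obtain ⟨P, S, hS, hP⟩ := hasGoodPaths_iff.1 (hyp _ hG' s t hst hnadj k _ hl' hCP')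
    exact hasGoodPaths_of_deleteEdges hst hA.subset hAne hP (by omega) (by simp; omega)
end

section
/- Let G be a graph of treewidth 1, let s, t ∈ V(G) be distinct vertices, and let (k,l) be a connectivity pair for s and t in G with k ≥ 0 and l ≥ 1. Then there exist k+l edge-disjoint s-t paths of which k+1 are internally disjoint. -/
namespace Multigraph

variable {V E : Type}

/-- A tree decomposition of the multigraph `G` with host tree `T`. -/
structure TreeDecomp (G : Multigraph V E) {ι : Type} (T : SimpleGraph ι) where
  isTree : T.IsTree
  bags : ι → Set V
  covers_vertex : ∀ v : V, ∃ i, v ∈ bags i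
  covers_edge : ∀ e ∈ G.edgeSet, ∃ i, ∀ v ∈ G.ends e, v ∈ bags i
  subtree : ∀ (v : V) (i j : ι), v ∈ bags i → v ∈ bags j →
    ∀ p : T.Walk i j, p.IsPath → ∀ x ∈ p.support, v ∈ bags x

/-- Every bag of the tree decomposition has at most `k + 1` vertices. -/
def TreeDecomp.WidthLE {G : Multigraph V E} {ι : Type} {T : SimpleGraph ι}
    (D : TreeDecomp G T) (k : ℕ) : Prop :=
  ∀ i, (D.bags i).Finite ∧ (D.bags i).ncard ≤ k + 1

/-- `G` has treewidth at most `k`: it admits a tree decomposition of width at most `k`. -/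
def TreewidthLE (G : Multigraph V E) (k : ℕ) : Prop :=
  ∃ (ι : Type) (T : SimpleGraph ι) (D : TreeDecomp G T), D.WidthLE k

end Multigraph


/-!
A tree decomposition of width `1` makes the underlying simple graph a forest: on a cycle
`u v x y ⋯ u`, the median of bags containing `uv`, `vx` and `xy` contains `v`, `x` and a third
vertex of the cycle. In a forest every `s`-`t` walk visits every vertex of the `s`-`t` path `P`
and uses an edge from the parallel class of every edge of `P`. So for `k ≥ 1` an inner vertex of
`P`, or the parallel class of a direct edge `st`, would be a disconnecting pair of cardinality
less than `k + l`; hence `k = 0`. Then every parallel class on `P` has at least `l` edges, and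
taking the `j`-th edge of each class yields `l` edge-disjoint copies of `P`.
-/
namespace SimpleGraph

variable {ι : Type} {T : SimpleGraph ι}

theorem IsAcyclic.support_subset_of_isPath (hT : T.IsAcyclic) {i j : ι} {p : T.Walk i j}
    (hp : p.IsPath) (q : T.Walk i j) : p.support ⊆ q.support := by
  classical
  obtain rfl : q.bypass = p :=
    congrArg Subtype.val <| (hT.subsingleton_path i j).elim ⟨_, q.bypass_isPath⟩ ⟨p, hp⟩
  exact q.support_bypass_subset_support

theorem IsAcyclic.edges_subset_of_isPath (hT : T.IsAcyclic) {i j : ι} {p : T.Walk i j}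
    (hp : p.IsPath) (q : T.Walk i j) : p.edges ⊆ q.edges := by
  classical
  obtain rfl : q.bypass = p :=
    congrArg Subtype.val <| (hT.subsingleton_path i j).elim ⟨_, q.bypass_isPath⟩ ⟨p, hp⟩
  exact q.edges_bypass_subset_edges

theorem IsAcyclic.exists_median (hT : T.IsAcyclic) {a b c : ι} {p : T.Walk b a} (hp : p.IsPath)
    (q : T.Walk b c) {r : T.Walk c a} (hr : r.IsPath) :
    ∃ μ ∈ p.support, μ ∈ q.support ∧ μ ∈ r.support := by
  classical
  induction q with
  | nil => exact ⟨_, p.start_mem_support, Walk.start_mem_support _, r.start_mem_support⟩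
  | @cons b b' c h q ih =>
    by_cases hb : b ∈ r.support
    · exact ⟨b, p.start_mem_support, (Walk.cons h q).start_mem_support, hb⟩
    by_cases hb' : b' ∈ p.support
    · obtain ⟨μ, hμp, hμq, hμr⟩ := ih (hp.dropUntil hb') hr
      exact ⟨μ, p.support_dropUntil_subset_support hb' hμp,
        List.mem_cons_of_mem _ hμq, hμr⟩
    obtain ⟨μ, hμp, hμq, hμr⟩ := ih (hp.cons hb' (h := h.symm)) hr
    rw [Walk.support_cons, List.mem_cons] at hμp
    rcases hμp with rfl | hμp
    · -- `b` followed by `r` from `b'` is a `b`-`a` path, so it lies on `p`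
      have hpath : (Walk.cons h (r.dropUntil μ hμr)).IsPath :=
        (hr.dropUntil hμr).cons fun hb'' => hb (r.support_dropUntil_subset_support hμr hb'')
      exact absurd (hT.support_subset_of_isPath hpath p
        (List.mem_cons_of_mem _ (Walk.start_mem_support _))) hb'
    · exact ⟨μ, hμp, List.mem_cons_of_mem _ hμq, hμr⟩

end SimpleGraph

namespace Multigraph

variable {V E : Type} {G : Multigraph V E}

def parallelEdges (G : Multigraph V E) (d : Sym2 V) : Set E :=
  {e | e ∈ G.edgeSet ∧ G.ends e = d}

def toSimpleGraph (G : Multigraph V E) : SimpleGraph V where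
  Adj u v := (G.parallelEdges s(u, v)).Nonempty
  symm := ⟨fun _ _ ⟨e, he, huv⟩ => ⟨e, he, huv.trans Sym2.eq_swap⟩⟩
  loopless := ⟨fun _ ⟨e, he, huu⟩ => G.no_loops e he (huu ▸ Sym2.mk_isDiag_iff.mpr rfl)⟩

theorem toSimpleGraph_adj {u v : V} :
    G.toSimpleGraph.Adj u v ↔ (G.parallelEdges s(u, v)).Nonempty :=
  Iff.rfl

theorem parallelEdges_nonempty {d : Sym2 V} (hd : d ∈ G.toSimpleGraph.edgeSet) :
    (G.parallelEdges d).Nonempty := by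
  induction d using Sym2.ind
  exact toSimpleGraph_adj.mp hd

namespace Walk

theorem mem_edgeSet_of_mem_edges : ∀ {u v : V} (p : G.Walk u v) {e : E}, e ∈ p.edges →
    e ∈ G.edgeSet
  | _, _, .nil _, _, he => by simp [edges] at he
  | _, _, .cons f hf _ p, e, he => by
    rcases List.mem_cons.mp he with rfl | he
    exacts [hf, p.mem_edgeSet_of_mem_edges he]

def toSimple : ∀ {u v : V}, G.Walk u v → G.toSimpleGraph.Walk u v
  | _, _, .nil v => .nil
  | _, _, .cons e he huv p => .cons (toSimpleGraph_adj.mpr ⟨e, he, huv⟩) p.toSimple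

@[simp]
theorem support_toSimple : ∀ {u v : V} (p : G.Walk u v), p.toSimple.support = p.support
  | _, _, .nil _ => rfl
  | _, _, .cons _ _ _ p => by
    rw [toSimple, SimpleGraph.Walk.support_cons, p.support_toSimple]; rfl

@[simp]
theorem edges_toSimple : ∀ {u v : V} (p : G.Walk u v), p.toSimple.edges = p.edges.map G.ends
  | _, _, .nil _ => rfl
  | _, _, .cons _ _ huv p => by
    rw [toSimple, SimpleGraph.Walk.edges_cons, p.edges_toSimple, edges, List.map_cons, huv]

def lift (c : G.toSimpleGraph.Dart → E) (hc : ∀ d, c d ∈ G.parallelEdges d.edge) :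
    ∀ {u v : V}, G.toSimpleGraph.Walk u v → G.Walk u v
  | _, _, .nil => .nil _
  | _, _, .cons h p => .cons (c ⟨(_, _), h⟩) (hc _).1 (hc _).2 (lift c hc p)

variable (c : G.toSimpleGraph.Dart → E) (hc : ∀ d, c d ∈ G.parallelEdges d.edge)

@[simp]
theorem support_lift : ∀ {u v : V} (p : G.toSimpleGraph.Walk u v),
    (lift c hc p).support = p.support
  | _, _, .nil => rfl
  | _, _, .cons _ p => by simp [lift, support, support_lift p]

@[simp]
theorem edges_lift : ∀ {u v : V} (p : G.toSimpleGraph.Walk u v),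
    (lift c hc p).edges = p.darts.map c
  | _, _, .nil => rfl
  | _, _, .cons _ p => by simp [lift, edges, edges_lift p]

end Walk

end Multigraph

namespace Multigraph.TreeDecomp

variable {V E ι : Type} {G : Multigraph V E} {T : SimpleGraph ι} (D : G.TreeDecomp T)

theorem exists_mem_bags_of_adj {u v : V} (h : G.toSimpleGraph.Adj u v) :
    ∃ i, u ∈ D.bags i ∧ v ∈ D.bags i := by
  obtain ⟨e, he, huv⟩ := h
  obtain ⟨i, hi⟩ := D.covers_edge e he
  exact ⟨i, hi u (huv ▸ Sym2.mem_mk_left u v), hi v (huv ▸ Sym2.mem_mk_right u v)⟩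

theorem exists_mem_support_mem_bags {u v : V} (w : G.toSimpleGraph.Walk u v) {i j : ι}
    {p : T.Walk i j} (hp : p.IsPath) (hu : u ∈ D.bags i) (hv : v ∈ D.bags j)
    {n : ι} (hn : n ∈ p.support) : ∃ z ∈ w.support, z ∈ D.bags n := by
  induction w generalizing i p with
  | nil => exact ⟨_, List.mem_singleton_self _, D.subtree _ i j hu hv p hp n hn⟩
  | @cons u u' v h w ih =>
    obtain ⟨c, hcu, hcu'⟩ := D.exists_mem_bags_of_adj h
    obtain ⟨q, hq, -⟩ := D.isTree.existsUnique_path i c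
    obtain ⟨r, hr, -⟩ := D.isTree.existsUnique_path c j
    have hn' := D.isTree.isAcyclic.support_subset_of_isPath hp (q.append r) hn
    rcases (SimpleGraph.Walk.mem_support_append_iff _ _).mp hn' with hnq | hnr
    · exact ⟨u, List.mem_cons_self, D.subtree u i c hu hcu q hq n hnq⟩
    · obtain ⟨z, hz, hzn⟩ := ih hr hcu' hv hnr
      exact ⟨z, List.mem_cons_of_mem _ hz, hzn⟩

theorem WidthLE.eq_of_mem_bags (hw : D.WidthLE 1) {i : ι} {a b c : V} (ha : a ∈ D.bags i)
    (hb : b ∈ D.bags i) (hc : c ∈ D.bags i) (hab : a ≠ b) (hac : a ≠ c) : b = c := by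
  by_contra hbc
  have h3 : ({a, b, c} : Set V).ncard = 3 :=
    Set.ncard_eq_three.mpr ⟨a, b, c, hab, hac, hbc, rfl⟩
  have hle := Set.ncard_le_ncard (Set.insert_subset ha (Set.insert_subset hb
    (Set.singleton_subset_iff.mpr hc))) (hw i).1
  have := (hw i).2
  omega

theorem isAcyclic_toSimpleGraph (hw : D.WidthLE 1) : G.toSimpleGraph.IsAcyclic := by
  intro u c hc
  rcases c with _ | ⟨huv, _ | ⟨hvx, _ | ⟨hxy, r⟩⟩⟩
  · exact hc.not_nil SimpleGraph.Walk.Nil.nil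
  · exact huv.ne rfl
  · exact ((SimpleGraph.Walk.cons_isCycle_iff _ _).mp hc).2 (by simp [Sym2.eq_swap])
  obtain ⟨hpath, -⟩ := (SimpleGraph.Walk.cons_isCycle_iff _ _).mp hc
  simp only [SimpleGraph.Walk.isPath_def, SimpleGraph.Walk.support_cons, List.nodup_cons,
    List.mem_cons, not_or] at hpath
  obtain ⟨⟨-, hvr⟩, hxr, -⟩ := hpath
  obtain ⟨a, hau, hav⟩ := D.exists_mem_bags_of_adj huv
  obtain ⟨b, hbv, hbx⟩ := D.exists_mem_bags_of_adj hvx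
  obtain ⟨c, hcx, hcy⟩ := D.exists_mem_bags_of_adj hxy
  obtain ⟨p, hp, -⟩ := D.isTree.existsUnique_path b a
  obtain ⟨q, hq, -⟩ := D.isTree.existsUnique_path b c
  obtain ⟨r', hr', -⟩ := D.isTree.existsUnique_path c a
  obtain ⟨μ, hμp, hμq, hμr⟩ := D.isTree.isAcyclic.exists_median hp q hr'
  obtain ⟨z, hzr, hzμ⟩ := D.exists_mem_support_mem_bags r hr' hcy hau hμr
  have hvμ := D.subtree _ b a hbv hav p hp μ hμp
  have hxμ := D.subtree _ b c hbx hcx q hq μ hμq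
  obtain rfl := hw.eq_of_mem_bags D hvμ hxμ hzμ hvx.ne fun hvz => hvr (hvz ▸ hzr)
  exact hxr hzr

end Multigraph.TreeDecomp

namespace Multigraph

variable {V E : Type} {G : Multigraph V E} {s t : V}

theorem Walk.support_subset_of_isAcyclic (hA : G.toSimpleGraph.IsAcyclic)
    {P : G.toSimpleGraph.Walk s t} (hP : P.IsPath) (q : G.Walk s t) : P.support ⊆ q.support :=
  q.support_toSimple ▸ hA.support_subset_of_isPath hP q.toSimple

theorem Walk.exists_mem_parallelEdges_of_isAcyclic (hA : G.toSimpleGraph.IsAcyclic)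
    {P : G.toSimpleGraph.Walk s t} (hP : P.IsPath) (q : G.Walk s t) {d : Sym2 V}
    (hd : d ∈ P.edges) : ∃ e ∈ q.edges, e ∈ G.parallelEdges d := by
  obtain ⟨e, he, rfl⟩ :=
    List.mem_map.mp (q.edges_toSimple ▸ hA.edges_subset_of_isPath hP q.toSimple hd)
  exact ⟨e, he, q.mem_edgeSet_of_mem_edges he, rfl⟩

theorem disconnectingPair_singleton {x : V} (hxs : x ≠ s) (hxt : x ≠ t)
    (hx : ∀ q : G.Walk s t, x ∈ q.support) : G.DisconnectingPair s t {x} ∅ :=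
  ⟨by simp [hxs, hxt], by simp, fun q => .inl ⟨x, hx q, Finset.mem_singleton_self x⟩⟩

theorem disconnectingPair_empty {F : Finset E} (hF : ↑F ⊆ G.edgeSet)
    (hq : ∀ q : G.Walk s t, ∃ e ∈ q.edges, e ∈ F) : G.DisconnectingPair s t ∅ F :=
  ⟨by simp, hF, fun q => .inr (hq q)⟩

namespace ConnectivityPair

variable {k l : ℕ}

theorem add_le_card (h : G.ConnectivityPair s t k l) {W : Finset V} {F : Finset E}
    (hWF : G.DisconnectingPair s t W F) (hW : W.card ≤ k) (hF : F.card ≤ l) :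
    k + l ≤ W.card + F.card := by
  by_contra hlt
  exact h.2 ⟨W, F, hWF, by omega, hW, hF⟩

theorem nonempty_walk (h : G.ConnectivityPair s t k l) (hkl : 0 < k + l) :
    Nonempty (G.Walk s t) := by
  by_contra hne
  have := h.add_le_card (disconnectingPair_empty (F := ∅) (by simp)
    fun q => (hne ⟨q⟩).elim) (by simp) (by simp)
  rw [Finset.card_empty, Finset.card_empty] at this
  omega

theorem exists_finset_card_eq (h : G.ConnectivityPair s t k l) {S : Set E} (hS : S ⊆ G.edgeSet)
    (hq : ∀ q : G.Walk s t, ∃ e ∈ q.edges, e ∈ S) :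
    ∃ Z : Finset E, ↑Z ⊆ S ∧ Z.card = l := by
  by_cases hfin : S.Finite
  · suffices hl : l ≤ hfin.toFinset.card by
      obtain ⟨Z, hZ, hcard⟩ := Finset.exists_subset_card_eq hl
      exact ⟨Z, fun e he => hfin.mem_toFinset.mp (hZ he), hcard⟩
    by_contra! hlt
    have := h.add_le_card (disconnectingPair_empty (by simpa using hS)
      fun q => by simpa using hq q) (by simp) hlt.le
    rw [Finset.card_empty, zero_add] at this
    omega
  · exact Set.Infinite.exists_subset_card_eq hfin l

theorem eq_zero_of_isAcyclic (h : G.ConnectivityPair s t k l) (hA : G.toSimpleGraph.IsAcyclic)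
    (hst : s ≠ t) (hl : 1 ≤ l) {P : G.toSimpleGraph.Walk s t} (hP : P.IsPath) : k = 0 := by
  classical
  by_contra hk
  obtain ⟨W, F, hWF, -, hF⟩ := h.1
  cases P with
  | nil => exact hst rfl
  | @cons _ x _ hsx _ =>
    by_cases hxt : x = t
    · subst hxt
      have hFst : ∀ e ∈ G.parallelEdges s(s, x), e ∈ F := by
        intro e ⟨he, hends⟩
        rcases hWF.2.2 (.cons e he hends (.nil x)) with ⟨y, hy, hyW⟩ | ⟨e', he', he'F⟩
        · have := hWF.1 hyW
          simp only [Walk.support, List.mem_cons, List.not_mem_nil, or_false] at hy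
          rcases hy with rfl | rfl <;> simp at this
        · rw [Walk.edges, Walk.edges, List.mem_singleton] at he'
          exact he' ▸ he'F
      have hcard := hF ▸ Finset.card_filter_le F (G.ends · = s(s, x))
      have := h.add_le_card (W := ∅) (F := F.filter (G.ends · = s(s, x)))
        (disconnectingPair_empty (fun e he => hWF.2.1 (Finset.mem_filter.mp he).1) fun q => by
          obtain ⟨e, he, hpar⟩ := Walk.exists_mem_parallelEdges_of_isAcyclic hA hP q
            (d := s(s, x)) (by simp)
          exact ⟨e, he, Finset.mem_filter.mpr ⟨hFst e hpar, hpar.2⟩⟩)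
        (by simp) hcard
      rw [Finset.card_empty, zero_add] at this
      omega
    · have := h.add_le_card (disconnectingPair_singleton hsx.ne.symm hxt fun q =>
        Walk.support_subset_of_isAcyclic hA hP q (by simp)) (by simp; omega) (by simp)
      rw [Finset.card_singleton, Finset.card_empty] at this
      omega

end ConnectivityPair

theorem hasGoodPaths_zero (hA : G.toSimpleGraph.IsAcyclic) {l : ℕ} (hl : 1 ≤ l)
    (h : G.ConnectivityPair s t 0 l) {P : G.toSimpleGraph.Walk s t} (hP : P.IsPath) :
    G.HasGoodPaths s t 0 l := by
  classical
  have hsel : ∀ d : G.toSimpleGraph.edgeSet, ∃ f : Fin l → E,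
      (∀ j, f j ∈ G.parallelEdges d) ∧ (↑d ∈ P.edges → Function.Injective f) := by
    rintro ⟨d, hd⟩
    by_cases hdP : d ∈ P.edges
    · obtain ⟨Z, hZ, hcard⟩ := h.exists_finset_card_eq (fun e he => he.1)
        fun q => Walk.exists_mem_parallelEdges_of_isAcyclic hA hP q hdP
      exact ⟨fun j => (Z.equivFinOfCardEq hcard).symm j, fun j => hZ (Subtype.prop _),
        fun _ => Subtype.val_injective.comp (Equiv.injective _)⟩
    · obtain ⟨e, he⟩ := parallelEdges_nonempty hd
      exact ⟨fun _ => e, fun _ => he, fun h => absurd h hdP⟩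
  choose sel hsel using hsel
  let Q (j : Fin l) : G.Walk s t :=
    Walk.lift (fun d => sel ⟨d.edge, d.edge_mem⟩ j) (fun d => (hsel _).1 j) P
  have hQ : ∀ i j, i ≠ j → EdgeDisjoint (Q i) (Q j) := by
    intro i j hij e hei hej
    simp only [Q, Walk.edges_lift, List.mem_map] at hei hej
    obtain ⟨d, hd, rfl⟩ := hei
    obtain ⟨d', hd', hdd'⟩ := hej
    have hj := ((hsel ⟨d'.edge, d'.edge_mem⟩).1 j).2
    have hi := ((hsel ⟨d.edge, d.edge_mem⟩).1 i).2
    rw [hdd'] at hj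
    have hdd : (⟨d'.edge, d'.edge_mem⟩ : G.toSimpleGraph.edgeSet) = ⟨d.edge, d.edge_mem⟩ :=
      Subtype.ext (hj.symm.trans hi)
    rw [hdd] at hdd'
    exact hij ((hsel _).2 (List.mem_map_of_mem hd) hdd').symm
  rw [HasGoodPaths, zero_add]
  refine ⟨Q, fun j => ?_, hQ, {⟨0, hl⟩}, rfl, by simp⟩
  rw [Walk.IsPath, Walk.support_lift]
  exact hP.support_nodup

end Multigraph

open Multigraph in
theorem beineke_harary_tw1_general {V E : Type} (G : Multigraph V E)
    (htw : G.TreewidthLE 1) (s t : V) (hst : s ≠ t)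
    (k l : ℕ) (hl : 1 ≤ l) (h : G.ConnectivityPair s t k l) :
    HasGoodPaths G s t k l := by
  classical
  obtain ⟨ι, T, D, hw⟩ := htw
  have hA := D.isAcyclic_toSimpleGraph hw
  obtain ⟨q⟩ := h.nonempty_walk (by omega)
  have hP := q.toSimple.bypass_isPath
  obtain rfl := h.eq_zero_of_isAcyclic hA hst hl hP
  exact hasGoodPaths_zero hA hl h hP

open Multigraph in
/-- Beineke–Harary for graphs of treewidth `1`. -/
theorem beineke_harary_tw1 {V E : Type} (G : Multigraph V E)
    (htw : G.TreewidthLE 1) (htw' : ¬ G.TreewidthLE 0) (s t : V) (hst : s ≠ t)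
    (k l : ℕ) (hl : 1 ≤ l) (h : G.ConnectivityPair s t k l) :
    HasGoodPaths G s t k l :=
  beineke_harary_tw1_general G htw s t hst k l hl h
end
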